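/- Let G be a group with lower central series Γ_*, and let f, g be endomorphisms of G with [f,x] ∈ Γ_{r+1} and [g,x] ∈ Γ_{s+1} for all x ∈ G (where [f,x] = f(x)x⁻¹). Then for all x ∈ G: [f∘g, x] ≡ [g,x]·[f,x] (mod Γ_{r+s+1}). -/

import Mathlib

/-!
Write `[f,x] = f(x)x⁻¹`. The identity `[f∘g, x]·([g,x]·[f,x])⁻¹ = [f, [g,x]]` reduces the
claim to `[f, Γ_k] ⊆ Γ_{k+r}` for `f` with `[f, G] ⊆ Γ_{r+1}` (here with `k = s+1`). That is proved
by induction on `k`: modulo `N = Γ_{k+r+1}`, for `a ∈ Γ_k` the element `[f,a] ∈ Γ_{k+r}` is central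
and `[f,b] ∈ Γ_{r+1}` commutes with `a` and with `⁅a,b⁆`, so `f⁅a,b⁆ = ⁅[f,a]a, [f,b]b⁆ ≡ ⁅a,b⁆`;
the needed commutator inclusions `[Γ_i, Γ_j] ⊆ Γ_{i+j}` come from the three subgroups lemma.
-/

/-- `Gam G k` is the `k`-th term `Γ_k` of the lower central series of `G`
(with the convention `Γ_1 = G`). -/
abbrev Gam (G : Type*) [Group G] (k : ℕ) : Subgroup G := (⊤ : Subgroup G).lowerCentralSeries (k - 1)

open scoped commutatorElement

namespace Subgroup

variable {G : Type*} [Group G]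

theorem commutator_commutator_le_of_rotate {A B C N : Subgroup G} [N.Normal]
    (h1 : ⁅⁅B, C⁆, A⁆ ≤ N) (h2 : ⁅⁅C, A⁆, B⁆ ≤ N) : ⁅⁅A, B⁆, C⁆ ≤ N := by
  have le_iff : ∀ X Y : Subgroup G,
      ⁅X, Y⁆ ≤ N ↔ ⁅X.map (QuotientGroup.mk' N), Y.map (QuotientGroup.mk' N)⁆ = ⊥ := by
    intro X Y
    rw [← map_commutator, map_eq_bot_iff, QuotientGroup.ker_mk']
  rw [le_iff, map_commutator] at h1 h2 ⊢
  exact commutator_commutator_eq_bot_of_rotate h1 h2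

theorem commutator_lowerCentralSeries_le (i j : ℕ) :
    ⁅(⊤ : Subgroup G).lowerCentralSeries i, (⊤ : Subgroup G).lowerCentralSeries j⁆ ≤
      (⊤ : Subgroup G).lowerCentralSeries (i + j + 1) := by
  induction j generalizing i with
  | zero => exact le_rfl
  | succ j ih =>
    rw [lowerCentralSeries_succ, commutator_comm]
    apply commutator_commutator_le_of_rotate
    · rw [commutator_comm ⊤, ← lowerCentralSeries_succ]
      convert ih (i + 1) using 2
      omega
    · calc _ ≤ ⁅(⊤ : Subgroup G).lowerCentralSeries (i + j + 1), ⊤⁆ :=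
            commutator_mono (ih i) le_rfl
        _ = _ := by rw [← lowerCentralSeries_succ, Nat.add_assoc i j 1]

end Subgroup

namespace QuotientGroup

variable {G : Type*} [Group G] {N : Subgroup G} [N.Normal]

theorem commute_mk_of_commutatorElement_mem {a b : G} (h : ⁅a, b⁆ ∈ N) :
    Commute (a : G ⧸ N) (b : G ⧸ N) :=
  commutatorElement_eq_one_iff_commute.1 ((eq_one_iff _).2 h)

theorem mk_mem_center_of_mem_lowerCentralSeries {n : ℕ} {x : G}
    (hx : x ∈ (⊤ : Subgroup G).lowerCentralSeries n) :
    (x : G ⧸ (⊤ : Subgroup G).lowerCentralSeries (n + 1)) ∈ Subgroup.center _ := by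
  refine Subgroup.mem_center_iff.2 fun q => ?_
  induction q using QuotientGroup.induction_on with
  | H z => exact (commute_mk_of_commutatorElement_mem
      (Subgroup.commutator_mem_commutator hx (Subgroup.mem_top z))).symm.eq

end QuotientGroup

section CommutatorIdentities

variable {G : Type*} [Group G]

theorem commutatorElement_mul_left_of_mem_center {c : G} (hc : c ∈ Subgroup.center G)
    (a b : G) : ⁅c * a, b⁆ = ⁅a, b⁆ := by
  have hc' := Subgroup.mem_center_iff.1 hc
  rw [commutatorElement_mul_left_eq_conj_mul, ← hc', commutatorElement_def c, ← hc']
  group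

theorem commutatorElement_mul_right_of_commute {a b d : G} (hda : Commute d a)
    (hdab : Commute d ⁅a, b⁆) : ⁅a, d * b⁆ = ⁅a, b⁆ := by
  rw [commutatorElement_mul_right_eq_mul_conj, hda.symm.commutator_eq, one_mul, hdab.eq,
    mul_inv_cancel_right]

end CommutatorIdentities

theorem MonoidHom.apply_mul_inv_mem_lowerCentralSeries_add {G : Type*} [Group G] (f : G →* G)
    {r : ℕ} (hf : ∀ x, f x * x⁻¹ ∈ (⊤ : Subgroup G).lowerCentralSeries r) (k : ℕ) {y : G}
    (hy : y ∈ (⊤ : Subgroup G).lowerCentralSeries k) :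
    f y * y⁻¹ ∈ (⊤ : Subgroup G).lowerCentralSeries (k + r) := by
  induction k generalizing y with
  | zero => simpa using hf y
  | succ k ih =>
    set N := (⊤ : Subgroup G).lowerCentralSeries (k + r + 1)
    let π := QuotientGroup.mk' N
    suffices h : (⊤ : Subgroup G).lowerCentralSeries (k + 1) ≤ (π.comp f).eqLocus π by
      rw [Nat.add_right_comm, ← div_eq_mul_inv, ← QuotientGroup.eq_iff_div_mem]
      exact h hy
    refine Subgroup.commutator_le.2 fun a ha b _ => ?_
    have hab : ⁅a, b⁆ ∈ (⊤ : Subgroup G).lowerCentralSeries (k + 1) :=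
      Subgroup.commutator_mem_commutator ha (Subgroup.mem_top b)
    have hfa : π (f a) = π (f a * a⁻¹) * π a := by rw [← map_mul, inv_mul_cancel_right]
    have hfb : π (f b) = π (f b * b⁻¹) * π b := by rw [← map_mul, inv_mul_cancel_right]
    have central : π (f a * a⁻¹) ∈ Subgroup.center (G ⧸ N) :=
      QuotientGroup.mk_mem_center_of_mem_lowerCentralSeries (ih ha)
    have commute_a : Commute (π (f b * b⁻¹)) (π a) := by
      refine QuotientGroup.commute_mk_of_commutatorElement_mem ?_
      rw [show N = (⊤ : Subgroup G).lowerCentralSeries (r + k + 1) by rw [Nat.add_comm r k]]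
      exact Subgroup.commutator_lowerCentralSeries_le r k
        (Subgroup.commutator_mem_commutator (hf b) ha)
    have commute_ab : Commute (π (f b * b⁻¹)) ⁅π a, π b⁆ := by
      rw [← map_commutatorElement]
      refine QuotientGroup.commute_mk_of_commutatorElement_mem
        (Subgroup.lowerCentralSeries_antitone ⊤ (show k + r + 1 ≤ r + (k + 1) + 1 by omega) ?_)
      exact Subgroup.commutator_lowerCentralSeries_le r (k + 1)
        (Subgroup.commutator_mem_commutator (hf b) hab)
    change π (f ⁅a, b⁆) = π ⁅a, b⁆
    rw [map_commutatorElement, map_commutatorElement, map_commutatorElement, hfa, hfb,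
      commutatorElement_mul_left_of_mem_center central,
      commutatorElement_mul_right_of_commute commute_a commute_ab]

/-- If `[f,x] ∈ Γ_{r+1}` and `[g,x] ∈ Γ_{s+1}` for all `x` (where `[f,x] = f(x)x⁻¹`),
then `[f∘g, x] ≡ [g,x]·[f,x] (mod Γ_{r+s+1})` for all `x`. -/
theorem stmt6 (G : Type*) [Group G] (f g : G →* G) (r s : ℕ)
    (hf : ∀ x : G, f x * x⁻¹ ∈ Gam G (r + 1))
    (hg : ∀ x : G, g x * x⁻¹ ∈ Gam G (s + 1)) :
    ∀ x : G, (f (g x) * x⁻¹) * ((g x * x⁻¹) * (f x * x⁻¹))⁻¹ ∈ Gam G (r + s + 1) := by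
  intro x
  have reduction : (f (g x) * x⁻¹) * ((g x * x⁻¹) * (f x * x⁻¹))⁻¹
      = f (g x * x⁻¹) * (g x * x⁻¹)⁻¹ := by
    simp only [map_mul, map_inv]
    group
  rw [reduction, Gam, Nat.add_sub_cancel, Nat.add_comm r s]
  exact f.apply_mul_inv_mem_lowerCentralSeries_add hf s (hg x)
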